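/- arXiv:math/0407100 — 3 statements merged into one kernel-verified Lean document; each statement's English description precedes it below -/
import Mathlib

section
/- For the formal power series F(z,t) = ∏_{k≥1} (1-z^{2k-2}t^k)^{-1}(1-z^{2k}t^k)^{-22}(1-z^{2k+2}t^k)^{-1} in ℤ[[z,t]], the coefficient of z²tⁿ equals 23 for every n ≥ 2. -/
/-!
Modulo `z⁴` the factor of index `k` is `1` as soon as `k ≥ 3`, and `(1 - z²t)²² ≡ 1 - 22z²t`,
so `F ≡ ((1 - t)(1 - 22z²t)(1 - z²t²))⁻¹ ≡ (1 + 22z²t + z²t²)/(1 - t)`. Dividing by `1 - t`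
sums coefficients along `t`, so the coefficient of `z²tⁿ` is `22 + 1` once `n ≥ 2`.
-/

open MvPowerSeries Finset

section GoettscheFactor

variable {R : Type*} [CommRing R]

def goettscheFactor (z t : R) (k : ℕ) : R :=
  (1 - z ^ (2 * k - 2) * t ^ k) * (1 - z ^ (2 * k) * t ^ k) ^ 22 * (1 - z ^ (2 * k + 2) * t ^ k)

theorem map_goettscheFactor {S : Type*} [CommRing S] (f : R →+* S) (z t : R) (k : ℕ) :
    f (goettscheFactor z t k) = goettscheFactor (f z) (f t) k := by
  simp [goettscheFactor]

theorem one_sub_pow_of_mul_self_eq_zero {u : R} (hu : u * u = 0) (n : ℕ) :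
    (1 - u) ^ n = 1 - n * u := by
  induction n with
  | zero => simp
  | succ n ih =>
    rw [pow_succ, ih]
    push_cast
    linear_combination (n : R) * hu

variable {z t : R}

theorem goettscheFactor_eq_one (hz : z ^ 4 = 0) {k : ℕ} (hk : 3 ≤ k) :
    goettscheFactor z t k = 1 := by
  have hvanish : ∀ m, 4 ≤ m → z ^ m = 0 := fun m hm => pow_eq_zero_of_le hm hz
  simp [goettscheFactor, hvanish (2 * k - 2) (by omega), hvanish (2 * k) (by omega),
    hvanish (2 * k + 2) (by omega)]

theorem prod_goettscheFactor (hz : z ^ 4 = 0) {N : ℕ} (hN : 2 ≤ N) :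
    ∏ k ∈ Icc 1 N, goettscheFactor z t k =
      (1 - t) * (1 - 22 * (z ^ 2 * t)) * (1 - z ^ 2 * t ^ 2) := by
  rw [← prod_subset (Icc_subset_Icc_right hN) fun k hk hk' =>
    goettscheFactor_eq_one hz (by simp only [mem_Icc] at hk hk'; omega)]
  have hsq : z ^ 2 * t * (z ^ 2 * t) = 0 := by linear_combination t ^ 2 * hz
  simp only [show Icc 1 2 = {1, 2} from rfl, prod_pair (by decide : (1 : ℕ) ≠ 2),
    goettscheFactor]
  norm_num [hz, pow_eq_zero_of_le (by norm_num : 4 ≤ 6) hz, one_sub_pow_of_mul_self_eq_zero hsq]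

theorem mul_one_sub_eq_of_mul_prod_goettscheFactor_eq_one (hz : z ^ 4 = 0) {N : ℕ} (hN : 2 ≤ N)
    {a : R} (ha : a * ∏ k ∈ Icc 1 N, goettscheFactor z t k = 1) :
    a * (1 - t) = 1 + 22 * z ^ 2 * t + z ^ 2 * t ^ 2 := by
  rw [prod_goettscheFactor hz hN] at ha
  have hinv :
      (1 - 22 * (z ^ 2 * t)) * (1 - z ^ 2 * t ^ 2) * (1 + 22 * z ^ 2 * t + z ^ 2 * t ^ 2) = 1 := by
    linear_combination
      (-484 * t ^ 2 - 22 * t ^ 3 - t ^ 4 + 484 * z ^ 2 * t ^ 4 + 22 * z ^ 2 * t ^ 5) * hz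
  linear_combination (1 + 22 * z ^ 2 * t + z ^ 2 * t ^ 2) * ha - a * (1 - t) * hinv

end GoettscheFactor

theorem monomial_single_add_single_one {σ R : Type*} [CommSemiring R] (i j : σ) (a b : ℕ) :
    monomial (Finsupp.single i a + Finsupp.single j b) (1 : R) = X i ^ a * X j ^ b := by
  rw [X_pow_eq, X_pow_eq, monomial_mul_monomial, one_mul]

theorem coeff_add_single_eq_sum_coeff_mul_one_sub_X {σ R : Type*} [CommRing R]
    (f : MvPowerSeries σ R) {i : σ} {d : σ →₀ ℕ} (hd : d i = 0) (n : ℕ) :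
    coeff (d + Finsupp.single i n) f =
      ∑ m ∈ range (n + 1), coeff (d + Finsupp.single i m) (f * (1 - X i)) := by
  classical
  simp only [mul_sub, mul_one, map_sub, X_def, coeff_mul_monomial]
  induction n with
  | zero => simp [hd]
  | succ n ih =>
    rw [sum_range_succ, ← ih, if_pos (by simp [hd]), Finsupp.single_add _ n 1, ← add_assoc,
      add_tsub_cancel_right]
    abel

theorem coeff_one_add_X_sq_mul_X_add_X_sq_mul_X_sq {R : Type*} [CommRing R] (m : ℕ) :
    coeff (Finsupp.single (0 : Fin 2) 2 + Finsupp.single 1 m)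
      (1 + 22 * X 0 ^ 2 * X 1 + X 0 ^ 2 * X 1 ^ 2 : MvPowerSeries (Fin 2) R) =
        (if m = 1 then 22 else 0) + if m = 2 then 1 else 0 := by
  nth_rewrite 1 [mul_assoc, ← pow_one (X 1)]
  rw [← map_ofNat (C (σ := Fin 2) (R := R)) 22]
  simp only [← monomial_single_add_single_one, map_add, coeff_one, coeff_C_mul, coeff_monomial]
  simp [Finsupp.ext_iff, Fin.forall_fin_two, eq_comm]

open MvPowerSeries in
/-- For the formal power series
`F(z,t) = ∏_{k≥1} (1-z^(2k-2)t^k)⁻¹ (1-z^(2k)t^k)⁻²² (1-z^(2k+2)t^k)⁻¹` in `ℤ[[z,t]]`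
(Göttsche's generating function for the Poincaré polynomials of Hilbert schemes of
points on a K3 surface), the coefficient of `z²tⁿ` equals `23` for every `n ≥ 2`.
Since the coefficient of `tⁿ` only involves the factors with `k ≤ n`, this is stated
via the finite partial products: `F N` denotes the inverse of the product of the
factors with `1 ≤ k ≤ N`, and the coefficient is taken for any `N ≥ n`.
(Variable `0` is `z`, variable `1` is `t`.) -/
theorem stmt_17 (F : ℕ → MvPowerSeries (Fin 2) ℤ)
    (hF : ∀ N : ℕ, F N * ∏ k ∈ Finset.Icc 1 N,
      ((1 - monomial (Finsupp.single (0 : Fin 2) (2 * k - 2) + Finsupp.single 1 k) 1) *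
        (1 - monomial (Finsupp.single (0 : Fin 2) (2 * k) + Finsupp.single 1 k) 1) ^ 22 *
        (1 - monomial (Finsupp.single (0 : Fin 2) (2 * k + 2) + Finsupp.single 1 k) 1)) = 1) :
    ∀ n : ℕ, 2 ≤ n → ∀ N : ℕ, n ≤ N →
      coeff (Finsupp.single (0 : Fin 2) 2 + Finsupp.single 1 n) (F N) = 23 := by
  intro n hn N hN
  set P : MvPowerSeries (Fin 2) ℤ := 1 + 22 * X 0 ^ 2 * X 1 + X 0 ^ 2 * X 1 ^ 2
  have hprod : F N * ∏ k ∈ Icc 1 N, goettscheFactor (X 0) (X 1) k = 1 := by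
    simpa only [goettscheFactor, monomial_single_add_single_one] using hF N
  let π := Ideal.Quotient.mk (Ideal.span {(X 0 : MvPowerSeries (Fin 2) ℤ) ^ 4})
  have hz : π (X 0) ^ 4 = 0 := by
    rw [← map_pow, Ideal.Quotient.eq_zero_iff_mem]
    exact Ideal.mem_span_singleton_self _
  have hmod : π (F N * (1 - X 1)) = π P := by
    have h := congrArg π hprod
    simp only [map_mul, map_prod, map_goettscheFactor, map_one] at h
    simpa [P, map_ofNat] using mul_one_sub_eq_of_mul_prod_goettscheFactor_eq_one hz (hn.trans hN) h
  have hdvd : X 0 ^ 4 ∣ F N * (1 - X 1) - P :=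
    Ideal.mem_span_singleton.1 (Ideal.Quotient.eq.1 hmod)
  have hcoeff : ∀ m, coeff (Finsupp.single 0 2 + Finsupp.single 1 m) (F N * (1 - X 1)) =
      coeff (Finsupp.single 0 2 + Finsupp.single 1 m) P := fun m =>
    sub_eq_zero.1 (by simpa using X_pow_dvd_iff.1 hdvd _ (by simp))
  rw [coeff_add_single_eq_sum_coeff_mul_one_sub_X _ (by simp) n]
  simp only [hcoeff, P, coeff_one_add_X_sq_mul_X_add_X_sq_mul_X_sq, sum_add_distrib, sum_ite_eq',
    mem_range]
  grind
end

section
/- Suppose p(t) = Σ_{i=0}^{2n} c_i t^i is a palindromic polynomial (c_i = c_{2n-i}) with n ≥ 6, c_0 = 1, c_1 = 23, c_2 = 300, c_3 = 2876. Then p(t) is not divisible by (1-t^{2n-3})/(1-t). -/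
open Polynomial in
/-- A palindromic polynomial `p = Σ_{i=0}^{2n} c_i t^i` (`c_i = c_{2n-i}`) with `n ≥ 6`,
`c₀ = 1`, `c₁ = 23`, `c₂ = 300`, `c₃ = 2876` is not divisible by
`(1-t^(2n-3))/(1-t) = 1 + t + ⋯ + t^(2n-4)`. -/
theorem stmt_18 (n : ℕ) (hn : 6 ≤ n) (p : Polynomial ℚ) (hdeg : p.natDegree ≤ 2 * n)
    (hpal : ∀ i ≤ 2 * n, p.coeff i = p.coeff (2 * n - i))
    (h0 : p.coeff 0 = 1) (h1 : p.coeff 1 = 23) (h2 : p.coeff 2 = 300)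
    (h3 : p.coeff 3 = 2876) :
    ¬ ((∑ i ∈ Finset.range (2 * n - 3), (X : Polynomial ℚ) ^ i) ∣ p) := by
  rintro ⟨s, hs⟩
  set m := 2 * n - 3 with hm
  set q : Polynomial ℚ := ∑ i ∈ Finset.range m, X ^ i with hq
  have hm9 : 9 ≤ m := by omega
  have qcoeff : ∀ k, q.coeff k = if k < m then 1 else 0 := by
    intro k
    rw [hq, Polynomial.finset_sum_coeff]
    simp only [Polynomial.coeff_X_pow]
    rw [Finset.sum_ite_eq (Finset.range m) k (fun _ => (1 : ℚ))]
    simp [Finset.mem_range]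
  have hp0 : p ≠ 0 := fun h => by simp [h] at h0
  have hqmul : q * (X - 1) = X ^ m - 1 := geom_sum_mul X m
  have hs0 : s ≠ 0 := by rintro rfl; rw [mul_zero] at hs; exact hp0 hs
  have hqne : q ≠ 0 := by
    intro h
    have := qcoeff 0
    rw [h] at this
    simp [show 0 < m by omega] at this
  -- degree bound on s
  have hqdeg : m - 1 ≤ q.natDegree := by
    apply Polynomial.le_natDegree_of_ne_zero
    rw [qcoeff]
    simp only [if_pos (by omega : m - 1 < m)]
    norm_num
  have hsdeg : s.natDegree ≤ 4 := by
    have := Polynomial.natDegree_mul hqne hs0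
    rw [← hs] at this
    omega
  set c : ℚ := s.eval 1 with hc
  obtain ⟨a, ha⟩ := Polynomial.X_sub_C_dvd_sub_C_eval (a := (1 : ℚ)) (p := s)
  have hadeg : a.natDegree ≤ 4 := by
    rcases eq_or_ne a 0 with rfl | hane
    · simp
    · have h1' : ((X - C (1:ℚ)) * a).natDegree = 1 + a.natDegree := by
        rw [Polynomial.natDegree_mul (Polynomial.X_sub_C_ne_zero 1) hane,
          Polynomial.natDegree_X_sub_C]
      have h2' : (s - C c).natDegree ≤ 4 := by
        refine le_trans (Polynomial.natDegree_sub_le _ _) ?_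
        simp [hsdeg]
      rw [ha, h1'] at h2'
      omega
  simp only [Polynomial.C_1] at ha
  have hseq : s = (X - 1) * a + C c := by
    have := ha
    linear_combination ha
  have hp : p = (X ^ m - 1) * a + C c * q := by
    rw [hs, hseq, ← hqmul]
    ring
  have key : ∀ k, p.coeff k =
      (if m ≤ k then a.coeff (k - m) else 0) - a.coeff k
        + c * (if k < m then 1 else 0) := by
    intro k
    rw [hp, Polynomial.coeff_add, Polynomial.coeff_C_mul, qcoeff, sub_mul, one_mul,
      Polynomial.coeff_sub, (Polynomial.commute_X_pow a m).eq, Polynomial.coeff_mul_X_pow']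
  have ham : a.coeff m = 0 :=
    Polynomial.coeff_eq_zero_of_natDegree_lt (by omega)
  have ham1 : a.coeff (m + 1) = 0 :=
    Polynomial.coeff_eq_zero_of_natDegree_lt (by omega)
  have e0 := key 0
  have e1 := key 1
  have em := key m
  have em1 := key (m + 1)
  rw [if_neg (by omega), if_pos (by omega)] at e0
  rw [if_neg (by omega), if_pos (by omega)] at e1
  rw [if_pos le_rfl, if_neg (by omega), Nat.sub_self, ham] at em
  rw [if_pos (by omega), if_neg (by omega), ham1,
    (by omega : m + 1 - m = 1)] at em1
  have hpm : p.coeff m = 2876 := by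
    rw [hpal m (by omega), (by omega : 2 * n - m = 3), h3]
  have hpm1 : p.coeff (m + 1) = 300 := by
    rw [hpal (m + 1) (by omega), (by omega : 2 * n - (m + 1) = 2), h2]
  rw [h0] at e0
  rw [h1] at e1
  rw [hpm] at em
  rw [hpm1] at em1
  simp at e0 e1 em em1
  linarith
end

section
/- Suppose p(t) = Σ_{i=0}^{2n} c_i t^i is a palindromic polynomial (c_i = c_{2n-i}) with n ≥ 6 divisible by 3, and c_1 = 23, c_2 = 300, c_4 = 22450 (so that c_2 + c_1 - c_4 ≠ 0). Then p(t) is not divisible by (1-t^{2n-3})/(1-t³). -/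
open Polynomial in
/-- A palindromic polynomial `p = Σ_{i=0}^{2n} c_i t^i` (`c_i = c_{2n-i}`) with `n ≥ 6`
divisible by `3` (so that `3 ∣ 2n-3`), `c₁ = 23`, `c₂ = 300`, `c₄ = 22450`
(`c₂ + c₁ - c₄ ≠ 0`), is not divisible by `Ψ(t) = (1-t^(2n-3))/(1-t³) = Σ t^(3i)`. -/
theorem stmt_19 (n : ℕ) (hn : 6 ≤ n) (h3n : 3 ∣ n) (p : Polynomial ℚ)
    (hdeg : p.natDegree ≤ 2 * n)
    (hpal : ∀ i ≤ 2 * n, p.coeff i = p.coeff (2 * n - i))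
    (h1 : p.coeff 1 = 23) (h2 : p.coeff 2 = 300) (h4 : p.coeff 4 = 22450) :
    ¬ ((∑ i ∈ Finset.range ((2 * n - 3) / 3), (X : Polynomial ℚ) ^ (3 * i)) ∣ p) := by
  rintro ⟨u, hu⟩
  set m := 2 * n - 3 with hm
  set k := m / 3 with hk
  have h3m : 3 ∣ m := by omega
  have hkm : 3 * k = m := by omega
  have hk3 : 3 ≤ k := by omega
  set Ψ : Polynomial ℚ := ∑ i ∈ Finset.range k, (X : Polynomial ℚ) ^ (3 * i) with hΨdef
  have hgeom : Ψ * (X ^ 3 - 1) = X ^ m - 1 := by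
    have : Ψ = ∑ i ∈ Finset.range k, ((X : Polynomial ℚ) ^ 3) ^ i := by
      simp [hΨdef, pow_mul]
    rw [this, geom_sum_mul, ← pow_mul, hkm]
  -- Ψ ≠ 0 and has natDegree ≥ m - 3
  have hΨcoeff : Ψ.coeff (3 * (k - 1)) = 1 := by
    simp only [hΨdef, finset_sum_coeff, coeff_X_pow]
    rw [Finset.sum_eq_single (k - 1)]
    · simp
    · intro b hb hne
      rw [if_neg (by omega)]
    · intro h
      exact absurd (Finset.mem_range.mpr (by omega)) h
  have hΨne : Ψ ≠ 0 := fun h => by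
    rw [h, coeff_zero] at hΨcoeff
    exact one_ne_zero hΨcoeff.symm
  have hΨdeg : 3 * (k - 1) ≤ Ψ.natDegree :=
    le_natDegree_of_ne_zero (by rw [hΨcoeff]; norm_num)
  have hu0 : u ≠ 0 := by
    rintro rfl
    rw [mul_zero] at hu
    rw [hu] at h1
    simp at h1
  have hdegmul : Ψ.natDegree + u.natDegree = p.natDegree := by
    rw [hu, natDegree_mul hΨne hu0]
  have hudeg : u.natDegree ≤ 6 := by omega
  have hum2 : u.coeff (m + 2) = 0 :=
    coeff_eq_zero_of_natDegree_lt (by omega)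
  -- the key polynomial identity
  have hq : p * X ^ 3 - p = u * X ^ m - u := by
    calc p * X ^ 3 - p = p * (X ^ 3 - 1) := by ring
      _ = Ψ * (X ^ 3 - 1) * u := by rw [hu]; ring
      _ = (X ^ m - 1) * u := by rw [hgeom]
      _ = u * X ^ m - u := by ring
  have e2 := congrArg (fun f => Polynomial.coeff f 2) hq
  have em2 := congrArg (fun f => Polynomial.coeff f (m + 2)) hq
  simp only [coeff_sub, coeff_mul_X_pow'] at e2 em2
  rw [if_neg (by omega), if_neg (by omega), h2] at e2
  rw [if_pos (by omega : 3 ≤ m + 2), if_pos (by omega : m ≤ m + 2)] at em2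
  have hA : m + 2 - 3 = 2 * n - 4 := by omega
  have hB : m + 2 = 2 * n - 1 := by omega
  have hC : m + 2 - m = 2 := by omega
  have hum2' : u.coeff (2 * n - 1) = 0 := by rw [← hB]; exact hum2
  rw [hA, hC, hB, hum2'] at em2
  have hp4 : p.coeff (2 * n - 4) = 22450 := by
    rw [← hpal 4 (by omega)]; exact h4
  have hp1 : p.coeff (2 * n - 1) = 23 := by
    rw [show (1 : ℕ) = 2 * n - (2 * n - 1) by omega] at h1
    rw [hpal (2 * n - 1) (by omega)]; exact h1
  rw [hp4, hp1] at em2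
  -- e2 : 0 - 300 = 0 - u.coeff 2 ; em2 : 22450 - 23 = u.coeff 2 - 0
  have : u.coeff 2 = 300 := by linarith
  rw [this] at em2
  norm_num at em2
end
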